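/- arXiv:1703.03258 — 2 statements merged into one kernel-verified Lean document; each statement's English description precedes it below -/
import Mathlib

section
/- Let n ≥ 3 be odd, let ζ be a primitive n-th root of unity in ℂ, and set γ_k = ζ^k + ζ^{-k}, δ_k = ζ^k - ζ^{-k}. Then for every a ∈ ℂ, as polynomials in two variables x, y, one has D_n(x, a) - D_n(y, a) = (x - y) · ∏_{k=1}^{(n-1)/2} (x² - γ_k·x·y + y² + δ_k²·a). -/
/-- The Dickson polynomials (as functions): `D 0 a x = 2`, `D 1 a x = x`,
`D (n+2) a x = x * D (n+1) a x - a * D n a x`. -/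
def dicksonC : ℕ → ℂ → ℂ → ℂ
  | 0, _, _ => 2
  | 1, _, x => x
  | n + 2, a, x => x * dicksonC (n + 1) a x - a * dicksonC n a x

/-!
Write `x = u + u'` and `y = v + v'` with `u * u' = v * v' = a`, so that `D n (x, a) = uⁿ + u'ⁿ`.
Since `u * (x - ζʲ v - ζ⁻ʲ v') = (u - ζʲ v) * (u - ζ⁻ʲ v')`, multiplying
`∏_{j < n} (x - ζʲ v - ζ⁻ʲ v')` by `uⁿ` gives
`(uⁿ - vⁿ) * (uⁿ - v'ⁿ) = uⁿ (D n (x, a) - D n (y, a))`,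
and `u ≠ 0` when `a ≠ 0`; for `a = 0` the product is the factorization of `xⁿ - yⁿ`.
For odd `n`, the factors `j = k` and `j = n - k` multiply to the `k`-th quadratic factor.
-/

open Finset

theorem Finset.prod_range_two_mul_add_one {M : Type*} [CommMonoid M] (g : ℕ → M) (m : ℕ) :
    ∏ j ∈ range (2 * m + 1), g j = g 0 * ∏ k ∈ Icc 1 m, (g k * g (2 * m + 1 - k)) := by
  have hreflect :
      ∏ k ∈ Ico 1 (m + 1), g (2 * m + 1 - k) = ∏ j ∈ Ico (m + 1) (2 * m + 1), g j := by
    rw [prod_Ico_reflect g 1 (by omega), show 2 * m + 1 + 1 - (m + 1) = m + 1 by omega,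
      Nat.add_sub_cancel]
  rw [prod_mul_distrib, ← Ico_add_one_right_eq_Icc, hreflect,
    prod_Ico_consecutive g (Nat.le_add_left 1 m) (by omega), prod_range_eq_mul_Ico g (by omega)]

theorem IsPrimitiveRoot.pow_sub_eq_inv_pow {K : Type*} [Field K] {ζ : K} {n k : ℕ}
    (hζ : IsPrimitiveRoot ζ n) (hk : k ≤ n) : ζ ^ (n - k) = ζ⁻¹ ^ k := by
  rcases Nat.eq_zero_or_pos n with rfl | hn
  · rw [Nat.le_zero.mp hk]; simp
  rw [pow_sub₀ ζ (hζ.ne_zero hn.ne') hk, hζ.pow_eq_one, one_mul, inv_pow]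

theorem IsPrimitiveRoot.pow_sub_pow_eq_prod_range {R : Type*} [CommRing R] [IsDomain R]
    {ζ : R} {n : ℕ} (hζ : IsPrimitiveRoot ζ n) (hn : 0 < n) (x y : R) :
    x ^ n - y ^ n = ∏ j ∈ range n, (x - ζ ^ j * y) := by
  simpa [Polynomial.eval_prod] using
    congrArg (Polynomial.eval x) (X_pow_sub_C_eq_prod hζ hn (rfl : y ^ n = y ^ n))

theorem exists_add_eq_and_mul_eq {K : Type*} [Field K] [IsAlgClosed K] [NeZero (2 : K)]
    (x a : K) : ∃ u u', u + u' = x ∧ u * u' = a := by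
  obtain ⟨s, hs⟩ := IsAlgClosed.exists_eq_mul_self (x ^ 2 - 4 * a)
  refine ⟨(x + s) / 2, (x - s) / 2, ?_, ?_⟩
  · field_simp; ring
  · field_simp; linear_combination hs

theorem quadratic_form_eq_mul_of_mul_eq_one {R : Type*} [CommRing R] {x v v' a c d : R}
    (hv : v * v' = a) (hcd : c * d = 1) :
    x ^ 2 - (c + d) * x * (v + v') + (v + v') ^ 2 + (c - d) ^ 2 * a =
      (x - (c * v + d * v')) * (x - (d * v + c * v')) := by
  linear_combination (2 - c ^ 2 - d ^ 2) * hv - (v ^ 2 + v' ^ 2 + 2 * a) * hcd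

theorem dicksonC_add_of_mul_eq {a u u' : ℂ} (h : u * u' = a) :
    ∀ n, dicksonC n a (u + u') = u ^ n + u' ^ n
  | 0 => by norm_num [dicksonC]
  | 1 => by simp [dicksonC]
  | n + 2 => by
    rw [dicksonC, dicksonC_add_of_mul_eq h (n + 1), dicksonC_add_of_mul_eq h n, ← h]
    ring

theorem dicksonC_param_zero (n : ℕ) (x : ℂ) (hn : n ≠ 0) : dicksonC n 0 x = x ^ n := by
  simpa [zero_pow hn] using dicksonC_add_of_mul_eq (mul_zero x) n

theorem dicksonC_add_sub_dicksonC_add_eq_prod {n : ℕ} {ζ a u u' v v' : ℂ}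
    (hζ : IsPrimitiveRoot ζ n) (hn : 0 < n) (hu : u * u' = a) (hv : v * v' = a) (hu0 : u ≠ 0) :
    dicksonC n a (u + u') - dicksonC n a (v + v') =
      ∏ j ∈ range n, (u + u' - (ζ ^ j * v + ζ⁻¹ ^ j * v')) := by
  refine mul_left_cancel₀ (pow_ne_zero n hu0) ?_
  have hun : u ^ n * u' ^ n = a ^ n := by rw [← mul_pow, hu]
  have hvn : v ^ n * v' ^ n = a ^ n := by rw [← mul_pow, hv]
  calc u ^ n * (dicksonC n a (u + u') - dicksonC n a (v + v'))
      = (u ^ n - v ^ n) * (u ^ n - v' ^ n) := by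
        rw [dicksonC_add_of_mul_eq hu, dicksonC_add_of_mul_eq hv]
        linear_combination hun - hvn
    _ = ∏ j ∈ range n, ((u - ζ ^ j * v) * (u - ζ⁻¹ ^ j * v')) := by
        rw [hζ.pow_sub_pow_eq_prod_range hn, hζ.inv.pow_sub_pow_eq_prod_range hn,
          prod_mul_distrib]
    _ = ∏ j ∈ range n, (u * (u + u' - (ζ ^ j * v + ζ⁻¹ ^ j * v'))) := by
        refine prod_congr rfl fun j _ => ?_
        have hζj : ζ ^ j * ζ⁻¹ ^ j = 1 := by
          rw [← mul_pow, mul_inv_cancel₀ (hζ.ne_zero hn.ne'), one_pow]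
        linear_combination ζ ^ j * ζ⁻¹ ^ j * hv + a * hζj - hu
    _ = u ^ n * ∏ j ∈ range n, (u + u' - (ζ ^ j * v + ζ⁻¹ ^ j * v')) := by
        rw [prod_mul_distrib, prod_const, card_range]

theorem exists_dicksonC_sub_eq_prod {n : ℕ} {ζ : ℂ} (hζ : IsPrimitiveRoot ζ n) (hn : 0 < n)
    (a x y : ℂ) : ∃ v v', v + v' = y ∧ v * v' = a ∧
      dicksonC n a x - dicksonC n a y =
        ∏ j ∈ range n, (x - (ζ ^ j * v + ζ⁻¹ ^ j * v')) := by
  rcases eq_or_ne a 0 with rfl | ha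
  · refine ⟨y, 0, add_zero y, mul_zero y, ?_⟩
    simp only [dicksonC_param_zero n _ hn.ne', mul_zero, add_zero]
    exact hζ.pow_sub_pow_eq_prod_range hn x y
  · obtain ⟨u, u', rfl, hu⟩ := exists_add_eq_and_mul_eq x a
    obtain ⟨v, v', rfl, hv⟩ := exists_add_eq_and_mul_eq y a
    exact ⟨v, v', rfl, hv,
      dicksonC_add_sub_dicksonC_add_eq_prod hζ hn hu hv (left_ne_zero_of_mul (hu ▸ ha))⟩

theorem dickson_diff_factorization_odd_general (n : ℕ) (hodd : Odd n)
    (ζ : ℂ) (hζ : IsPrimitiveRoot ζ n) (a : ℂ) : ∀ x y : ℂ,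
    dicksonC n a x - dicksonC n a y =
      (x - y) * ∏ k ∈ Finset.Icc 1 ((n - 1) / 2),
        (x ^ 2 - (ζ ^ k + ζ⁻¹ ^ k) * x * y + y ^ 2 + (ζ ^ k - ζ⁻¹ ^ k) ^ 2 * a) := by
  intro x y
  obtain ⟨m, rfl⟩ := hodd
  obtain ⟨v, v', rfl, hv, hD⟩ := exists_dicksonC_sub_eq_prod hζ (by omega) a x y
  rw [hD, prod_range_two_mul_add_one, Nat.add_sub_cancel, Nat.mul_div_cancel_left m two_pos,
    pow_zero, pow_zero, one_mul, one_mul]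
  refine congrArg _ (prod_congr rfl fun k hk => ?_)
  have hkn : k ≤ 2 * m + 1 := by simp only [mem_Icc] at hk; omega
  have hζk : ζ ^ k * ζ⁻¹ ^ k = 1 := by
    rw [← mul_pow, mul_inv_cancel₀ (hζ.ne_zero (by omega)), one_pow]
  rw [hζ.pow_sub_eq_inv_pow hkn, hζ.inv.pow_sub_eq_inv_pow hkn, inv_inv,
    quadratic_form_eq_mul_of_mul_eq_one hv hζk]

/-- For odd `n ≥ 3` and `ζ` a primitive `n`-th root of unity, with
`γ_k = ζᵏ + ζ⁻ᵏ` and `δ_k = ζᵏ - ζ⁻ᵏ`, one has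
`D n (x,a) - D n (y,a) = (x-y) ∏_{k=1}^{(n-1)/2} (x² - γ_k x y + y² + δ_k² a)`. -/
theorem dickson_diff_factorization_odd (n : ℕ) (hn : 3 ≤ n) (hodd : Odd n)
    (ζ : ℂ) (hζ : IsPrimitiveRoot ζ n) (a : ℂ) : ∀ x y : ℂ,
    dicksonC n a x - dicksonC n a y =
      (x - y) * ∏ k ∈ Finset.Icc 1 ((n - 1) / 2),
        (x ^ 2 - (ζ ^ k + ζ⁻¹ ^ k) * x * y + y ^ 2 + (ζ ^ k - ζ⁻¹ ^ k) ^ 2 * a) :=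
  dickson_diff_factorization_odd_general n hodd ζ hζ a
end

section
/- Let n ≥ 2 be even, let ζ be a primitive n-th root of unity in ℂ, and set γ_k = ζ^k + ζ^{-k}, δ_k = ζ^k - ζ^{-k}. Then for every a ∈ ℂ, as polynomials in x, y, one has D_n(x, a) - D_n(y, a) = (x - y)(x + y) · ∏_{k=1}^{(n-2)/2} (x² - γ_k·x·y + y² + δ_k²·a). -/
/-! Writing `y = u + v` with `u v = a` gives `Dₙ(y, a) = uⁿ + vⁿ`, and
`Dₙ(x, a) - uⁿ - vⁿ = ∏_{k < n} (x - ζᵏ u - ζ⁻ᵏ v)`. For even `n` the factors `k = 0` and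
`k = n / 2` give `(x - y)(x + y)`, and the factors `k` and `n - k` multiply to
`x² - γ_k x y + y² + δ_k² a`. -/

open Finset

theorem exists_add_eq_and_mul_eq_s8 (x a : ℂ) : ∃ s t : ℂ, s + t = x ∧ s * t = a := by
  obtain ⟨r, hr⟩ := IsAlgClosed.exists_eq_mul_self (x ^ 2 - 4 * a)
  exact ⟨(x + r) / 2, (x - r) / 2, by ring, by linear_combination (1 / 4 : ℂ) * hr⟩

theorem IsPrimitiveRoot.prod_range_sub_pow_mul {R : Type*} [CommRing R] [IsDomain R] {n : ℕ}
    {ζ : R} (hζ : IsPrimitiveRoot ζ n) (hn : 0 < n) (s c : R) :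
    ∏ k ∈ range n, (s - ζ ^ k * c) = s ^ n - c ^ n := by
  simpa [Polynomial.eval_prod] using
    (congrArg (Polynomial.eval s) (X_pow_sub_C_eq_prod hζ hn rfl)).symm

/-- Multiplying by `sⁿ` splits each factor as `s (s + t - ζᵏu - ζ⁻ᵏv) = (s - ζᵏu)(s - ζ⁻ᵏv)`,
because `st = uv`. -/
theorem pow_add_pow_sub_eq_prod {K : Type*} [Field K] {n : ℕ} {ζ : K} (hζ : IsPrimitiveRoot ζ n)
    (hn : 0 < n) {s t u v : K} (hs : s ≠ 0) (h : s * t = u * v) :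
    s ^ n + t ^ n - (u ^ n + v ^ n) = ∏ k ∈ range n, (s + t - (ζ ^ k * u + ζ⁻¹ ^ k * v)) := by
  have hζ0 : ζ ≠ 0 := hζ.ne_zero hn.ne'
  have hsplit : ∀ k ∈ range n, s * (s + t - (ζ ^ k * u + ζ⁻¹ ^ k * v)) =
      (s - ζ ^ k * u) * (s - ζ⁻¹ ^ k * v) := by
    intro k _
    have hk : ζ ^ k * ζ⁻¹ ^ k = 1 := by rw [← mul_pow, mul_inv_cancel₀ hζ0, one_pow]
    linear_combination h - u * v * hk
  have hprod : s ^ n * ∏ k ∈ range n, (s + t - (ζ ^ k * u + ζ⁻¹ ^ k * v)) =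
      (s ^ n - u ^ n) * (s ^ n - v ^ n) := by
    rw [← hζ.prod_range_sub_pow_mul hn, ← hζ.inv.prod_range_sub_pow_mul hn, ← prod_mul_distrib,
      ← prod_congr rfl hsplit, prod_mul_distrib, prod_const, card_range]
  apply mul_left_cancel₀ (pow_ne_zero n hs)
  rw [hprod]
  linear_combination congrArg (· ^ n) h

theorem Finset.prod_range_two_mul_add_two {M : Type*} [CommMonoid M] (f : ℕ → M) (m : ℕ) :
    ∏ k ∈ range (2 * m + 2), f k = f 0 * f (m + 1) * ∏ k ∈ Icc 1 m, (f k * f (2 * m + 2 - k)) := by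
  have hlow : ∏ k ∈ range (m + 2), f k = f 0 * f (m + 1) * ∏ k ∈ Icc 1 m, f k := by
    rw [prod_range_succ, prod_range_succ', ← Ico_add_one_right_eq_Icc, prod_Ico_eq_prod_range]
    simp only [add_tsub_cancel_right, add_comm 1]
    ac_rfl
  have hhigh : ∏ k ∈ Ico (m + 2) (2 * m + 2), f k = ∏ k ∈ Icc 1 m, f (2 * m + 2 - k) := by
    refine prod_nbij' (2 * m + 2 - ·) (2 * m + 2 - ·) ?_ ?_ ?_ ?_ ?_ <;> intro k hk
    all_goals simp only [mem_Ico, mem_Icc] at hk ⊢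
    all_goals first | omega | congr 1; omega
  rw [← prod_range_mul_prod_Ico f (by omega : m + 2 ≤ 2 * m + 2), hlow, hhigh, prod_mul_distrib,
    mul_assoc]

theorem sub_add_mul_sub_add_of_mul_eq_one {R : Type*} [CommRing R] {w w' : R} (hw : w * w' = 1)
    (x u v : R) :
    (x - (w * u + w' * v)) * (x - (w' * u + w * v)) =
      x ^ 2 - (w + w') * x * (u + v) + (u + v) ^ 2 + (w - w') ^ 2 * (u * v) := by
  linear_combination (u + v) ^ 2 * hw

theorem IsPrimitiveRoot.prod_range_sub_eq_mul_prod_Icc {K : Type*} [Field K] {ζ : K} {m : ℕ}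
    (hζ : IsPrimitiveRoot ζ (2 * m + 2)) (x u v : K) :
    ∏ k ∈ range (2 * m + 2), (x - (ζ ^ k * u + ζ⁻¹ ^ k * v)) =
      (x - (u + v)) * (x + (u + v)) * ∏ k ∈ Icc 1 m, (x ^ 2 - (ζ ^ k + ζ⁻¹ ^ k) * x * (u + v) +
        (u + v) ^ 2 + (ζ ^ k - ζ⁻¹ ^ k) ^ 2 * (u * v)) := by
  have hζ0 : ζ ≠ 0 := hζ.ne_zero (by omega)
  have hhalf : ζ ^ (m + 1) = -1 :=
    (hζ.pow (by omega) (by ring : 2 * m + 2 = (m + 1) * 2)).eq_neg_one_of_two_right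
  rw [prod_range_two_mul_add_two]
  congr 1
  · simp only [pow_zero, one_mul, inv_pow, hhalf, inv_neg, inv_one]
    ring
  · refine prod_congr rfl fun k hk ↦ ?_
    have hk : k ≤ 2 * m + 2 := by simp only [mem_Icc] at hk; omega
    rw [pow_sub₀ ζ hζ0 hk, inv_pow_sub₀ hζ0 hk, hζ.pow_eq_one, inv_one, one_mul, one_mul, ← inv_pow]
    exact sub_add_mul_sub_add_of_mul_eq_one (by rw [← mul_pow, mul_inv_cancel₀ hζ0, one_pow]) x u v

theorem dicksonC_add_mul (u v : ℂ) : ∀ n, dicksonC n (u * v) (u + v) = u ^ n + v ^ n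
  | 0 => by norm_num [dicksonC]
  | 1 => by simp [dicksonC]
  | n + 2 => by
    rw [dicksonC, dicksonC_add_mul u v (n + 1), dicksonC_add_mul u v n]
    ring

theorem continuous_dicksonC (a : ℂ) : ∀ n, Continuous (dicksonC n a)
  | 0 => continuous_const
  | 1 => continuous_id
  | n + 2 => by
    have h₁ := continuous_dicksonC a (n + 1)
    have h₀ := continuous_dicksonC a n
    show Continuous fun x => x * dicksonC (n + 1) a x - a * dicksonC n a x
    fun_prop

/-- For `x ≠ 0` write `x = s + t` with `s t = u v` and `s ≠ 0`; continuity in `x` covers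
`x = 0`. -/
theorem dicksonC_mul_sub_eq_prod {n : ℕ} {ζ : ℂ} (hζ : IsPrimitiveRoot ζ n) (hn : 0 < n)
    (u v x : ℂ) :
    dicksonC n (u * v) x - (u ^ n + v ^ n) = ∏ k ∈ range n, (x - (ζ ^ k * u + ζ⁻¹ ^ k * v)) := by
  suffices (fun x ↦ dicksonC n (u * v) x - (u ^ n + v ^ n)) =
      fun x ↦ ∏ k ∈ range n, (x - (ζ ^ k * u + ζ⁻¹ ^ k * v)) from congrFun this x
  refine Continuous.ext_on (dense_compl_singleton 0)
    ((continuous_dicksonC _ n).sub continuous_const)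
    (continuous_finsetProd _ fun k _ ↦ by fun_prop) fun x (hx : x ≠ 0) ↦ ?_
  obtain ⟨s, t, rfl, hst⟩ := exists_add_eq_and_mul_eq_s8 x (u * v)
  rw [← hst, dicksonC_add_mul]
  wlog hs : s ≠ 0 generalizing s t
  · have ht : t ≠ 0 := by rintro rfl; simp_all
    simpa only [add_comm] using this t s (by rwa [mul_comm]) (by rwa [add_comm]) ht
  exact pow_add_pow_sub_eq_prod hζ hn hs hst

/-- For even `n ≥ 2` and `ζ` a primitive `n`-th root of unity, with
`γ_k = ζᵏ + ζ⁻ᵏ` and `δ_k = ζᵏ - ζ⁻ᵏ`, one has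
`D n (x,a) - D n (y,a) = (x-y)(x+y) ∏_{k=1}^{(n-2)/2} (x² - γ_k x y + y² + δ_k² a)`. -/
theorem dickson_diff_factorization_even (n : ℕ) (hn : 2 ≤ n) (heven : Even n)
    (ζ : ℂ) (hζ : IsPrimitiveRoot ζ n) (a : ℂ) : ∀ x y : ℂ,
    dicksonC n a x - dicksonC n a y =
      (x - y) * (x + y) * ∏ k ∈ Finset.Icc 1 ((n - 2) / 2),
        (x ^ 2 - (ζ ^ k + ζ⁻¹ ^ k) * x * y + y ^ 2 + (ζ ^ k - ζ⁻¹ ^ k) ^ 2 * a) := by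
  intro x y
  obtain ⟨m, rfl⟩ : ∃ m, n = 2 * m + 2 := ⟨(n - 2) / 2, by obtain ⟨c, rfl⟩ := heven; omega⟩
  obtain ⟨u, v, rfl, rfl⟩ := exists_add_eq_and_mul_eq_s8 y a
  rw [dicksonC_add_mul, dicksonC_mul_sub_eq_prod hζ (by omega),
    hζ.prod_range_sub_eq_mul_prod_Icc, show (2 * m + 2 - 2) / 2 = m by omega]
end
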